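/- arXiv:2408.16066 — 2 statements merged into one kernel-verified Lean document; each statement's English description precedes it below -/
import Mathlib

section
/- Let P, Q ∈ H_n be rank-k orthogonal projections with 1 ≤ k < n. Then span_ℝ S(P) = span_ℝ S(Q) if and only if P = Q, or n = 2k and P = I − Q. -/
open Matrix

/-- `P` is an orthogonal projection of rank `k`. -/
def IsProjOfRank {m : Type*} [Fintype m] [DecidableEq m]
    (P : Matrix m m ℂ) (k : ℕ) : Prop :=
  P * P = P ∧ Pᴴ = P ∧ P.rank = k

/-- The `k`-numerical range `W_k(A) = { tr (A P) : P an orthogonal projection of rank k }`. -/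
def WK {m : Type*} [Fintype m] [DecidableEq m] (k : ℕ) (A : Matrix m m ℂ) : Set ℂ :=
  {z | ∃ P : Matrix m m ℂ, IsProjOfRank P k ∧ z = (A * P).trace}

/-- The `k`-numerical radius `w_k(A) = max { |tr (A P)| : P a rank-k orthogonal projection }`. -/
noncomputable def wk {m : Type*} [Fintype m] [DecidableEq m] (k : ℕ) (A : Matrix m m ℂ) : ℝ :=
  sSup {r : ℝ | ∃ P : Matrix m m ℂ, IsProjOfRank P k ∧ r = ‖(A * P).trace‖}

/-- `A` and `B` are parallel with respect to the `k`-numerical radius. -/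
noncomputable def ParallelWk {m : Type*} [Fintype m] [DecidableEq m]
    (k : ℕ) (A B : Matrix m m ℂ) : Prop :=
  ∃ μ : ℂ, ‖μ‖ = 1 ∧ wk k (A + μ • B) = wk k A + wk k B

/-- Sum of the `k` largest eigenvalues of a Hermitian matrix (`0` if not Hermitian). -/
noncomputable def sumKLargest {m : Type*} [Fintype m] [DecidableEq m]
    (k : ℕ) (A : Matrix m m ℂ) : ℝ :=
  if h : A.IsHermitian then
    sSup {r : ℝ | ∃ s : Finset m, s.card = k ∧ r = ∑ i ∈ s, h.eigenvalues i}
  else 0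

/-- Sum of the `k` smallest eigenvalues of a Hermitian matrix (`0` if not Hermitian). -/
noncomputable def sumKSmallest {m : Type*} [Fintype m] [DecidableEq m]
    (k : ℕ) (A : Matrix m m ℂ) : ℝ :=
  if h : A.IsHermitian then
    sInf {r : ℝ | ∃ s : Finset m, s.card = k ∧ r = ∑ i ∈ s, h.eigenvalues i}
  else 0

/-!
For a Hermitian `B = V diag(λ) V*` and a rank-`k` projection `R`, Ky Fan's bound
`tr (B R) ≤ λ₁ + ⋯ + λ_k ≤ w_k(B)` (eigenvalues in decreasing order) shows that `B ∈ S(R)` forces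
equality, and equality forces `B` to commute with `R`; so everything in `span S(Q)` commutes
with `Q`.

Conversely, write `P = V diag(1_s) V*`. Every `V diag(d) V*` with `d ≥ 1` on `s` and `|d| ≤ 1`
off `s` lies in `S(P)`, so differences give `V diag(e) V*` for every small `e`, and the same holds
for any basis obtained from `V` by a rotation inside an eigenspace of `P`. If all of these commute
with `Q`, then `V* Q V` is diagonal and constant on `s` and on its complement, and a trace count
leaves only `Q = P`, or `Q = 1 - P` with `n = 2k`.

For `n = 2k`, if `B ∈ S(1 - Q)` then `c - B ∈ S(Q)` for large `c`: the shift turns the `k` smallest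
eigenvalues of `B`, on the complement of the top block, into the `k` largest. As `c ∈ S(Q)` too,
`B ∈ span S(Q)`.
-/

section TopSum

variable {ι : Type*} [Fintype ι] [DecidableEq ι]

lemma exists_finset_card_eq_threshold (d : ι → ℝ) {k : ℕ} (hk : 0 < k)
    (hkι : k ≤ Fintype.card ι) :
    ∃ (s : Finset ι) (θ : ℝ), s.card = k ∧ (∀ i ∈ s, θ ≤ d i) ∧ ∀ j ∉ s, d j ≤ θ := by
  obtain ⟨s, hs, hmax⟩ := Finset.exists_max_image (Finset.univ.powersetCard k)
    (fun t => ∑ i ∈ t, d i) (Finset.powersetCard_nonempty.mpr (by simpa using hkι))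
  rw [Finset.mem_powersetCard_univ] at hs
  obtain ⟨i₀, hi₀, hmin⟩ := Finset.exists_min_image s d (Finset.card_pos.mp (hs ▸ hk))
  refine ⟨s, d i₀, hs, hmin, fun j hj => not_lt.mp fun hlt => ?_⟩
  have hj' : j ∉ s.erase i₀ := fun h => hj (Finset.mem_of_mem_erase h)
  have hswap := hmax (insert j (s.erase i₀)) <| Finset.mem_powersetCard_univ.mpr <| by
    rw [Finset.card_insert_of_notMem hj', Finset.card_erase_of_mem hi₀, hs]
    omega
  rw [Finset.sum_insert hj'] at hswap
  linarith [Finset.sum_erase_add s d hi₀]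

variable (d c : ι → ℝ) (s : Finset ι) (θ : ℝ)

lemma sum_sub_sum_mul_eq (hc : ∑ i, c i = s.card) :
    ∑ i ∈ s, d i - ∑ i, d i * c i
      = ∑ i ∈ s, (d i - θ) * (1 - c i) + ∑ i ∈ sᶜ, (θ - d i) * c i := by
  have hdc := Finset.sum_add_sum_compl s (fun i => d i * c i)
  have hc' := Finset.sum_add_sum_compl s c
  simp only [sub_mul, mul_sub, mul_one, Finset.sum_sub_distrib, ← Finset.mul_sum,
    Finset.sum_const, nsmul_eq_mul] at hdc hc' ⊢
  linear_combination hdc - θ * hc' - θ * hc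

variable {d c s θ}

lemma sum_mul_le_sum_of_threshold (hc0 : ∀ i, 0 ≤ c i) (hc1 : ∀ i, c i ≤ 1)
    (hc : ∑ i, c i = s.card) (hθs : ∀ i ∈ s, θ ≤ d i) (hθc : ∀ j ∉ s, d j ≤ θ) :
    ∑ i, d i * c i ≤ ∑ i ∈ s, d i := by
  have h := sum_sub_sum_mul_eq d c s θ hc
  have h1 : 0 ≤ ∑ i ∈ s, (d i - θ) * (1 - c i) := Finset.sum_nonneg fun i hi =>
    mul_nonneg (sub_nonneg.mpr (hθs i hi)) (sub_nonneg.mpr (hc1 i))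
  have h2 : 0 ≤ ∑ i ∈ sᶜ, (θ - d i) * c i := Finset.sum_nonneg fun i hi =>
    mul_nonneg (sub_nonneg.mpr (hθc i (Finset.mem_compl.mp hi))) (hc0 i)
  linarith

lemma eq_threshold_or_of_sum_mul_eq (hc0 : ∀ i, 0 ≤ c i) (hc1 : ∀ i, c i ≤ 1)
    (hc : ∑ i, c i = s.card) (hθs : ∀ i ∈ s, θ ≤ d i) (hθc : ∀ j ∉ s, d j ≤ θ)
    (heq : ∑ i, d i * c i = ∑ i ∈ s, d i) (i : ι) : d i = θ ∨ c i = 0 ∨ c i = 1 := by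
  have h := sum_sub_sum_mul_eq d c s θ hc
  have h1 : ∀ i ∈ s, 0 ≤ (d i - θ) * (1 - c i) := fun i hi =>
    mul_nonneg (sub_nonneg.mpr (hθs i hi)) (sub_nonneg.mpr (hc1 i))
  have h2 : ∀ i ∈ sᶜ, 0 ≤ (θ - d i) * c i := fun i hi =>
    mul_nonneg (sub_nonneg.mpr (hθc i (Finset.mem_compl.mp hi))) (hc0 i)
  rw [heq, sub_self, eq_comm, add_eq_zero_iff_of_nonneg (Finset.sum_nonneg h1)
    (Finset.sum_nonneg h2), Finset.sum_eq_zero_iff_of_nonneg h1,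
    Finset.sum_eq_zero_iff_of_nonneg h2] at h
  by_cases hi : i ∈ s
  · rcases mul_eq_zero.mp (h.1 i hi) with h' | h'
    · exact Or.inl (sub_eq_zero.mp h')
    · exact Or.inr (Or.inr (sub_eq_zero.mp h').symm)
  · rcases mul_eq_zero.mp (h.2 i (Finset.mem_compl.mpr hi)) with h' | h'
    · exact Or.inl (sub_eq_zero.mp h').symm
    · exact Or.inr (Or.inl h')

end TopSum

namespace Matrix

variable {m : Type*} {M : Matrix m m ℂ}

lemma IsHermitian.im_apply_self (hM : M.IsHermitian) (i : m) : (M i i).im = 0 := by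
  have h := congrArg Complex.im (hM.apply i i)
  rw [RCLike.star_def, Complex.conj_im] at h
  linarith

lemma IsHermitian.ofReal_re_apply_self (hM : M.IsHermitian) (i : m) : ((M i i).re : ℂ) = M i i :=
  Complex.ext rfl (hM.im_apply_self i).symm

variable [Fintype m] [DecidableEq m]

lemma IsHermitian.diag_re_sub_sq_eq (hM : M.IsHermitian) (hMM : M * M = M) (i : m) :
    (M i i).re - (M i i).re ^ 2 = ∑ j ∈ Finset.univ.erase i, Complex.normSq (M i j) := by
  have hre : (M i i).re = ∑ j, Complex.normSq (M i j) := by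
    conv_lhs => rw [← hMM, mul_apply]
    rw [Complex.re_sum]
    refine Finset.sum_congr rfl fun j _ => ?_
    rw [← hM.apply j i, RCLike.star_def, Complex.mul_conj, Complex.ofReal_re]
  have hsq : Complex.normSq (M i i) = (M i i).re ^ 2 := by
    rw [Complex.normSq_apply, hM.im_apply_self, mul_zero, add_zero, sq]
  have := Finset.add_sum_erase Finset.univ (fun j => Complex.normSq (M i j)) (Finset.mem_univ i)
  rw [hsq, ← hre] at this
  linarith

lemma IsHermitian.diag_re_mem_Icc (hM : M.IsHermitian) (hMM : M * M = M) (i : m) :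
    0 ≤ (M i i).re ∧ (M i i).re ≤ 1 := by
  have h := hM.diag_re_sub_sq_eq hMM i
  have : 0 ≤ (M i i).re - (M i i).re ^ 2 := h ▸ Finset.sum_nonneg fun j _ => Complex.normSq_nonneg _
  constructor <;> nlinarith

lemma IsHermitian.apply_eq_zero_of_diag_re (hM : M.IsHermitian) (hMM : M * M = M) {i j : m}
    (hi : (M i i).re = 0 ∨ (M i i).re = 1) (hij : j ≠ i) : M i j = 0 := by
  have h := hM.diag_re_sub_sq_eq hMM i
  have hzero : (M i i).re - (M i i).re ^ 2 = 0 := by rcases hi with hi | hi <;> simp [hi]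
  rw [hzero, eq_comm, Finset.sum_eq_zero_iff_of_nonneg fun j _ => Complex.normSq_nonneg _] at h
  exact Complex.normSq_eq_zero.mp (h j (Finset.mem_erase.mpr ⟨hij, Finset.mem_univ j⟩))

lemma IsHermitian.norm_apply_le_one (hM : M.IsHermitian) (hMM : M * M = M) (i j : m) :
    ‖M i j‖ ≤ 1 := by
  obtain ⟨h0, h1⟩ := hM.diag_re_mem_Icc hMM i
  rcases eq_or_ne j i with rfl | hij
  · rw [← hM.ofReal_re_apply_self j, Complex.norm_real, Real.norm_eq_abs, abs_le]
    constructor <;> linarith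
  · have hle : Complex.normSq (M i j) ≤ (M i i).re - (M i i).re ^ 2 := by
      rw [hM.diag_re_sub_sq_eq hMM i]
      exact Finset.single_le_sum (fun j _ => Complex.normSq_nonneg (M i j))
        (Finset.mem_erase.mpr ⟨hij, Finset.mem_univ j⟩)
    rw [← Complex.sq_norm] at hle
    nlinarith [norm_nonneg (M i j)]

lemma IsHermitian.eigenvalues_mem_of_mul_self (hM : M.IsHermitian) (hMM : M * M = M) (i : m) :
    hM.eigenvalues i = 0 ∨ hM.eigenvalues i = 1 := by
  set v := ⇑(hM.eigenvectorBasis i)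
  have hv : v ≠ 0 := by
    simpa [v] using (hM.eigenvectorBasis.orthonormal.ne_zero i)
  have h := hM.mulVec_eigenvectorBasis i
  have h2 : M *ᵥ (M *ᵥ v) = M *ᵥ v := by rw [mulVec_mulVec, hMM]
  rw [h, mulVec_smul, h, smul_smul, ← sub_eq_zero, ← sub_smul, smul_eq_zero, sub_eq_zero] at h2
  exact IsIdempotentElem.iff_eq_zero_or_one.mp (h2.resolve_right hv)

lemma IsHermitian.trace_eq_rank_of_mul_self (hM : M.IsHermitian)
    (hMM : M * M = M) : M.trace = M.rank := by
  rw [hM.trace_eq_sum_eigenvalues, hM.rank_eq_card_non_zero_eigs, Fintype.card_subtype,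
    ← Finset.sum_boole]
  refine Finset.sum_congr rfl fun i _ => ?_
  rcases hM.eigenvalues_mem_of_mul_self hMM i with h | h <;> simp [h]

end Matrix

open Matrix

variable {m : Type*} [Fintype m] [DecidableEq m] {k : ℕ} {P Q R M V : Matrix m m ℂ} {s : Finset m}

lemma IsProjOfRank.isHermitian (hP : IsProjOfRank P k) : P.IsHermitian :=
  hP.2.1

lemma IsProjOfRank.le_card (hP : IsProjOfRank P k) : k ≤ Fintype.card m :=
  hP.2.2 ▸ rank_le_card_width P

lemma IsProjOfRank.trace_eq (hP : IsProjOfRank P k) : P.trace = k := by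
  rw [hP.isHermitian.trace_eq_rank_of_mul_self hP.1, hP.2.2]

lemma IsProjOfRank.sum_re_diag (hR : IsProjOfRank R k) : ∑ i, (R i i).re = k := by
  have h := congrArg Complex.re hR.trace_eq
  rwa [trace, Complex.re_sum, Complex.natCast_re] at h

lemma IsProjOfRank.diag_re_nonneg (hR : IsProjOfRank R k) (i : m) : 0 ≤ (R i i).re :=
  (hR.isHermitian.diag_re_mem_Icc hR.1 i).1

lemma IsProjOfRank.diag_re_le_one (hR : IsProjOfRank R k) (i : m) : (R i i).re ≤ 1 :=
  (hR.isHermitian.diag_re_mem_Icc hR.1 i).2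

lemma IsProjOfRank.star_mul_mul (hR : IsProjOfRank R k) (hV : V ∈ unitaryGroup m ℂ) :
    IsProjOfRank (star V * R * V) k := by
  obtain ⟨hRR, hRH, hrank⟩ := hR
  have hVV := Unitary.mul_star_self_of_mem hV
  refine ⟨?_, ?_, ?_⟩
  · calc star V * R * V * (star V * R * V) = star V * (R * (V * star V) * R) * V := by
          simp only [mul_assoc]
      _ = star V * R * V := by rw [hVV, mul_one, hRR, mul_assoc]
  · simp only [conjTranspose_mul, hRH, star_eq_conjTranspose, conjTranspose_conjTranspose,
      mul_assoc]
  · rw [rank_mul_eq_left_of_isUnit_det _ _ (isUnit_det_of_left_inverse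
        (Unitary.star_mul_self_of_mem hV)),
      rank_mul_eq_right_of_isUnit_det _ _ (isUnit_det_of_left_inverse hVV), hrank]

noncomputable def conjDiag (V : Matrix m m ℂ) (d : m → ℝ) : Matrix m m ℂ :=
  V * diagonal (fun i => (d i : ℂ)) * star V

lemma conjDiag_isHermitian (V : Matrix m m ℂ) (d : m → ℝ) : (conjDiag V d).IsHermitian := by
  rw [IsHermitian, conjDiag, conjTranspose_mul, conjTranspose_mul, ← star_eq_conjTranspose,
    star_star, diagonal_conjTranspose, mul_assoc]
  congr 3
  ext i
  simp

lemma conjDiag_sub (V : Matrix m m ℂ) (d e : m → ℝ) :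
    conjDiag V (d - e) = conjDiag V d - conjDiag V e := by
  simp only [conjDiag, Pi.sub_apply, Complex.ofReal_sub, ← diagonal_sub, mul_sub, sub_mul]

lemma trace_conjDiag_mul (V R : Matrix m m ℂ) (d : m → ℝ) :
    (conjDiag V d * R).trace = ∑ i, d i * (star V * R * V) i i := by
  rw [conjDiag, mul_assoc, mul_assoc, trace_mul_comm, mul_assoc, mul_assoc]
  simp [trace, diagonal_mul]

lemma Matrix.IsHermitian.eq_conjDiag {A : Matrix m m ℂ} (hA : A.IsHermitian) :
    A = conjDiag hA.eigenvectorUnitary hA.eigenvalues := by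
  conv_lhs => rw [hA.spectral_theorem, Unitary.conjStarAlgAut_apply]
  rfl

lemma Matrix.IsHermitian.exists_eq_conjDiag {A : Matrix m m ℂ} (hA : A.IsHermitian) :
    ∃ V ∈ unitaryGroup m ℂ, ∃ d : m → ℝ, A = conjDiag V d :=
  ⟨_, hA.eigenvectorUnitary.2, _, hA.eq_conjDiag⟩

lemma conjDiag_mul_conjDiag (hV : V ∈ unitaryGroup m ℂ) (d e : m → ℝ) :
    conjDiag V d * conjDiag V e = conjDiag V (d * e) := by
  simp only [conjDiag, mul_assoc, ← mul_assoc (star V) V, Unitary.star_mul_self_of_mem hV, one_mul,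
    ← mul_assoc (diagonal _), diagonal_mul_diagonal, Pi.mul_apply, Complex.ofReal_mul]

lemma trace_conjDiag (hV : V ∈ unitaryGroup m ℂ) (d : m → ℝ) : (conjDiag V d).trace = ∑ i, d i := by
  rw [conjDiag, trace_mul_cycle, Unitary.star_mul_self_of_mem hV, one_mul, trace_diagonal]
  push_cast
  rfl

lemma commute_conjDiag_iff (hV : V ∈ unitaryGroup m ℂ) (d : m → ℝ) (R : Matrix m m ℂ) :
    Commute (conjDiag V d) R ↔ Commute (diagonal fun i => (d i : ℂ)) (star V * R * V) := by
  let e := Unitary.conjStarAlgAut ℂ (Matrix m m ℂ) ⟨V, hV⟩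
  have hR : e (star V * R * V) = R := by
    simp only [e, Unitary.conjStarAlgAut_apply, mul_assoc, Unitary.mul_star_self_of_mem hV]
    simp [← mul_assoc, Unitary.mul_star_self_of_mem hV]
  have h := commute_map_iff (f := e) e.injective (x := diagonal fun i => (d i : ℂ))
    (y := star V * R * V)
  rwa [hR] at h

lemma isProjOfRank_conjDiag_indicator (hV : V ∈ unitaryGroup m ℂ) (s : Finset m) :
    IsProjOfRank (conjDiag V ((s : Set m).indicator 1)) s.card := by
  have hD : IsProjOfRank (diagonal fun i => (((s : Set m).indicator 1 i : ℝ) : ℂ)) s.card := by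
    refine ⟨?_, ?_, ?_⟩
    · rw [diagonal_mul_diagonal]
      congr 1
      ext i
      by_cases hi : i ∈ s <;> simp [hi]
    · rw [diagonal_conjTranspose]
      congr 1
      ext i
      simp
    · rw [rank_diagonal, Fintype.card_subtype]
      congr 1
      ext i
      by_cases hi : i ∈ s <;> simp [hi]
  simpa [conjDiag] using hD.star_mul_mul (Unitary.star_mem hV)

lemma IsProjOfRank.exists_eq_conjDiag_indicator (hP : IsProjOfRank P k) :
    ∃ V ∈ unitaryGroup m ℂ, ∃ s : Finset m, s.card = k ∧
      P = conjDiag V ((s : Set m).indicator 1) := by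
  have hPH := hP.isHermitian
  set s := Finset.univ.filter fun i => hPH.eigenvalues i = 1
  have hU := hPH.eigenvectorUnitary.2
  have heq : P = conjDiag hPH.eigenvectorUnitary ((s : Set m).indicator 1) := by
    conv_lhs => rw [hPH.eq_conjDiag]
    congr 1
    ext i
    rcases hPH.eigenvalues_mem_of_mul_self hP.1 i with h | h <;> simp [s, h]
  refine ⟨_, hU, s, ?_, heq⟩
  rw [← (isProjOfRank_conjDiag_indicator hU s).2.2, ← heq, hP.2.2]

lemma trace_conjDiag_mul_conjDiag_indicator (hV : V ∈ unitaryGroup m ℂ) (d : m → ℝ)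
    (s : Finset m) :
    (conjDiag V d * conjDiag V ((s : Set m).indicator 1)).trace = ∑ i ∈ s, d i := by
  rw [conjDiag_mul_conjDiag hV, trace_conjDiag hV]
  push_cast
  rw [← Finset.sum_subset (Finset.subset_univ s) fun i _ hi => by simp [hi]]
  exact Finset.sum_congr rfl fun i hi => by simp [hi]

lemma norm_trace_mul_le (B : Matrix m m ℂ) (hR : IsProjOfRank R k) :
    ‖(B * R).trace‖ ≤ ∑ i, ∑ j, ‖B i j‖ := by
  simp only [trace, diag_apply, mul_apply]
  refine (norm_sum_le _ _).trans (Finset.sum_le_sum fun i _ => (norm_sum_le _ _).trans ?_)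
  refine Finset.sum_le_sum fun j _ => ?_
  rw [norm_mul]
  exact mul_le_of_le_one_right (norm_nonneg _) (hR.isHermitian.norm_apply_le_one hR.1 j i)

lemma norm_trace_mul_le_wk (B : Matrix m m ℂ) (hR : IsProjOfRank R k) :
    ‖(B * R).trace‖ ≤ wk k B :=
  le_csSup ⟨_, by rintro r ⟨R', hR', rfl⟩; exact norm_trace_mul_le B hR'⟩ ⟨R, hR, rfl⟩

lemma trace_conjDiag_mul_eq_sum_re (V : Matrix m m ℂ) (hR : R.IsHermitian) (d : m → ℝ) :
    (conjDiag V d * R).trace = ((∑ i, d i * ((star V * R * V) i i).re : ℝ) : ℂ) := by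
  have hM : (star V * R * V).IsHermitian := by
    simpa [star_eq_conjTranspose] using isHermitian_conjTranspose_mul_mul V hR
  rw [trace_conjDiag_mul]
  push_cast
  refine Finset.sum_congr rfl fun i _ => ?_
  rw [hM.ofReal_re_apply_self]

/-- Ky Fan's maximum principle. -/
lemma sum_mul_diag_re_le (hR : IsProjOfRank R k) {d : m → ℝ} {θ : ℝ}
    (hs : s.card = k) (hθs : ∀ i ∈ s, θ ≤ d i) (hθc : ∀ j ∉ s, d j ≤ θ) :
    ∑ i, d i * (R i i).re ≤ ∑ i ∈ s, d i :=
  sum_mul_le_sum_of_threshold hR.diag_re_nonneg hR.diag_re_le_one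
    (by rw [hs, hR.sum_re_diag]) hθs hθc

lemma wk_conjDiag (hV : V ∈ unitaryGroup m ℂ) {d : m → ℝ} {θ : ℝ} (hθ : 0 ≤ θ)
    (hθs : ∀ i ∈ s, θ ≤ d i) (hθc : ∀ j ∉ s, |d j| ≤ θ) :
    wk s.card (conjDiag V d) = ∑ i ∈ s, d i := by
  have hsum_nonneg : 0 ≤ ∑ i ∈ s, d i := Finset.sum_nonneg fun i hi => hθ.trans (hθs i hi)
  have hP := isProjOfRank_conjDiag_indicator hV s
  refine le_antisymm (csSup_le ⟨_, _, hP, rfl⟩ ?_) ?_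
  · rintro r ⟨R, hR, rfl⟩
    rw [trace_conjDiag_mul_eq_sum_re V hR.isHermitian, Complex.norm_real, Real.norm_eq_abs,
      abs_le]
    have hM := hR.star_mul_mul hV
    refine ⟨?_, sum_mul_diag_re_le hM rfl hθs fun j hj => (le_abs_self _).trans (hθc j hj)⟩
    have hc0 := hM.diag_re_nonneg
    have hterm : ∀ i, -(d i * ((star V * R * V) i i).re) ≤ θ * ((star V * R * V) i i).re := by
      intro i
      by_cases hi : i ∈ s
      · nlinarith [hθs i hi, hc0 i]
      · nlinarith [neg_le_abs (d i), hθc i hi, hc0 i]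
    calc -(∑ i ∈ s, d i) ≤ -∑ _i ∈ s, θ := neg_le_neg (Finset.sum_le_sum hθs)
      _ = -∑ i, θ * ((star V * R * V) i i).re := by
        rw [← Finset.mul_sum, hM.sum_re_diag, Finset.sum_const, nsmul_eq_mul, mul_comm]
      _ ≤ ∑ i, d i * ((star V * R * V) i i).re := by
        rw [neg_le, ← Finset.sum_neg_distrib]
        exact Finset.sum_le_sum fun i _ => hterm i
  · have h := norm_trace_mul_le_wk (conjDiag V d) hP
    rwa [trace_conjDiag_mul_conjDiag_indicator hV, Complex.norm_real, Real.norm_eq_abs,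
      abs_of_nonneg hsum_nonneg] at h

/-- The set `S(P)` of the paper, for a rank-`k` projection `P`. -/
def wkAttaining (k : ℕ) (P : Matrix m m ℂ) : Set (Matrix m m ℂ) :=
  {B | B.IsHermitian ∧ (B * P).trace = (wk k B : ℂ)}

lemma sum_mul_diag_conj_eq_of_mem_wkAttaining (hV : V ∈ unitaryGroup m ℂ)
    (hR : IsProjOfRank R k) {d : m → ℝ} {θ : ℝ} (hs : s.card = k)
    (hθs : ∀ i ∈ s, θ ≤ d i) (hθc : ∀ j ∉ s, d j ≤ θ) (hmem : conjDiag V d ∈ wkAttaining k R) :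
    ∑ i, d i * ((star V * R * V) i i).re = ∑ i ∈ s, d i := by
  have hwk : ∑ i, d i * ((star V * R * V) i i).re = wk k (conjDiag V d) := by
    exact_mod_cast (trace_conjDiag_mul_eq_sum_re V hR.isHermitian d).symm.trans hmem.2
  refine le_antisymm (sum_mul_diag_re_le (hR.star_mul_mul hV) hs hθs hθc) (hwk ▸ ?_)
  have h := norm_trace_mul_le_wk (conjDiag V d) (hs ▸ isProjOfRank_conjDiag_indicator hV s)
  rw [trace_conjDiag_mul_conjDiag_indicator hV, Complex.norm_real, Real.norm_eq_abs] at h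
  exact (le_abs_self _).trans h

lemma commute_of_mem_wkAttaining (hk : 0 < k) (hR : IsProjOfRank R k) {B : Matrix m m ℂ}
    (hB : B ∈ wkAttaining k R) : Commute B R := by
  obtain ⟨U, hU, d, rfl⟩ := IsHermitian.exists_eq_conjDiag hB.1
  obtain ⟨s, θ, hs, hθs, hθc⟩ := exists_finset_card_eq_threshold d hk hR.le_card
  set M := star U * R * U
  have hM : IsProjOfRank M k := hR.star_mul_mul hU
  have hd : ∀ i, d i = θ ∨ (M i i).re = 0 ∨ (M i i).re = 1 :=
    eq_threshold_or_of_sum_mul_eq hM.diag_re_nonneg hM.diag_re_le_one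
      (by rw [hs, hM.sum_re_diag]) hθs hθc
      (sum_mul_diag_conj_eq_of_mem_wkAttaining hU hR hs hθs hθc hB)
  -- A row of a projection whose diagonal entry is `0` or `1` vanishes off the diagonal.
  have hθ_of_ne : ∀ {i j}, j ≠ i → M i j ≠ 0 → d i = θ := fun hij hMij =>
    (hd _).resolve_right fun h => hMij (hM.isHermitian.apply_eq_zero_of_diag_re hM.1 h hij)
  rw [commute_conjDiag_iff hU]
  change Commute _ M
  ext i j
  rw [diagonal_mul, mul_diagonal]
  by_cases hij : j = i
  · rw [hij, mul_comm]
  by_cases hMij : M i j = 0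
  · simp [hMij]
  have hMji : M j i ≠ 0 := by
    rw [← hM.isHermitian.apply]
    exact star_ne_zero.mpr hMij
  rw [hθ_of_ne hij hMij, hθ_of_ne (Ne.symm hij) hMji, mul_comm]

lemma commute_of_mem_span_wkAttaining (hk : 0 < k) (hR : IsProjOfRank R k) {B : Matrix m m ℂ}
    (hB : B ∈ Submodule.span ℝ (wkAttaining k R)) : Commute B R := by
  have hle : Submodule.span ℝ (wkAttaining k R) ≤
      Subalgebra.toSubmodule (Subalgebra.centralizer ℝ {R}) :=
    Submodule.span_le.mpr fun B' hB' => (Subalgebra.mem_centralizer_iff ℝ).mpr fun _ hg =>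
      ((Set.mem_singleton_iff.mp hg) ▸ commute_of_mem_wkAttaining hk hR hB').eq.symm
  exact ((Subalgebra.mem_centralizer_iff ℝ).mp (hle hB) R rfl).symm

lemma conjDiag_mem_wkAttaining (hV : V ∈ unitaryGroup m ℂ) {d : m → ℝ} {θ : ℝ} (hθ : 0 ≤ θ)
    (hθs : ∀ i ∈ s, θ ≤ d i) (hθc : ∀ j ∉ s, |d j| ≤ θ) :
    conjDiag V d ∈ wkAttaining s.card (conjDiag V ((s : Set m).indicator 1)) :=
  ⟨conjDiag_isHermitian V d, by
    rw [trace_conjDiag_mul_conjDiag_indicator hV, wk_conjDiag hV hθ hθs hθc]⟩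

lemma commute_conjDiag_of_abs_le_one (hV : V ∈ unitaryGroup m ℂ)
    (hQ : ∀ B ∈ wkAttaining s.card (conjDiag V ((s : Set m).indicator 1)), Commute B Q)
    {e : m → ℝ} (he : ∀ i, |e i| ≤ 1) : Commute (conjDiag V e) Q := by
  have hmem : ∀ e : m → ℝ, (∀ i, |e i| ≤ 1) →
      conjDiag V (2 • (s : Set m).indicator 1 + e) ∈
        wkAttaining s.card (conjDiag V ((s : Set m).indicator 1)) := fun e he =>
    conjDiag_mem_wkAttaining hV zero_le_one
      (fun i hi => by simp [hi]; linarith [neg_abs_le (e i), he i])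
      (fun j hj => by simpa [hj] using he j)
  have h := (hQ _ (hmem e he)).sub_left (hQ _ (hmem 0 fun i => by simp))
  rwa [← conjDiag_sub, add_zero, add_sub_cancel_left] at h

lemma isDiag_star_mul_mul_of_forall_commute (hV : V ∈ unitaryGroup m ℂ)
    (hP : P = conjDiag V ((s : Set m).indicator 1))
    (hQ : ∀ B ∈ wkAttaining s.card P, Commute B Q) : (star V * Q * V).IsDiag := by
  intro i j hij
  have h := (commute_conjDiag_iff hV _ Q).mp
    (commute_conjDiag_of_abs_le_one hV (hP ▸ hQ) (e := Pi.single i 1)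
      fun l => by by_cases hl : l = i <;> simp [hl])
  have hij' := congrFun (congrFun h.eq i) j
  simpa [diagonal_mul, mul_diagonal, Pi.single_apply, Ne.symm hij] using hij'

/-- The rotation with cosine `3/5` and sine `4/5` in the `(t, u)`-plane; the Pythagorean angle
keeps all entries rational. -/
noncomputable def planeRotation (t u : m) : Matrix m m ℂ :=
  1 + single t t (-2/5) + single u u (-2/5) + single t u (4/5) - single u t (4/5)

lemma planeRotation_mem_unitaryGroup {t u : m} (htu : t ≠ u) :
    planeRotation t u ∈ unitaryGroup m ℂ := by
  rw [mem_unitaryGroup_iff']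
  ext i j
  simp only [planeRotation, star_add, star_sub, star_one, star_eq_conjTranspose,
    conjTranspose_single, add_mul, mul_add, sub_mul, mul_sub, one_mul, mul_one,
    single_mul_single_same, single_mul_single_of_ne _ _ _ _ htu,
    single_mul_single_of_ne _ _ _ _ htu.symm,
    Matrix.add_apply, Matrix.sub_apply, one_apply, Matrix.single_apply]
  have hut := htu.symm
  by_cases hi : t = i <;> by_cases hj : t = j <;> by_cases hi' : u = i <;> by_cases hj' : u = j <;>
    simp_all <;> norm_num

lemma commute_single_diagonal {i j : m} (c : ℂ) {f : m → ℂ} (hf : f i = f j) :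
    Commute (single i j c) (diagonal f) := by
  ext a b
  simp only [mul_diagonal, diagonal_mul, Matrix.single_apply]
  split_ifs with h
  · rw [← h.1, ← h.2, hf, mul_comm]
  · simp

lemma commute_planeRotation_diagonal {t u : m} {f : m → ℂ} (hf : f t = f u) :
    Commute (planeRotation t u) (diagonal f) :=
  ((((Commute.one_left _).add_left (commute_single_diagonal _ rfl)).add_left
    (commute_single_diagonal _ rfl)).add_left (commute_single_diagonal _ hf)).sub_left
    (commute_single_diagonal _ hf.symm)

lemma planeRotation_entry {t u : m} (htu : t ≠ u) (q : m → ℂ) :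
    (star (planeRotation t u) * diagonal q * planeRotation t u) t u = 12/25 * (q t - q u) := by
  simp only [planeRotation, star_add, star_sub, star_one, star_eq_conjTranspose,
    conjTranspose_single, add_mul, mul_add, sub_mul, mul_sub, one_mul, mul_one,
    single_mul_mul_single, Matrix.add_apply, Matrix.sub_apply, Matrix.single_apply, mul_diagonal,
    diagonal_mul, diagonal_apply]
  simp [htu, htu.symm]
  ring

lemma conjDiag_mul_eq_of_commute {W : Matrix m m ℂ} (hW : W ∈ unitaryGroup m ℂ) {d : m → ℝ}
    (h : Commute W (diagonal fun i => (d i : ℂ))) : conjDiag (V * W) d = conjDiag V d := by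
  rw [conjDiag, conjDiag, star_mul, mul_assoc V, h.eq]
  simp only [mul_assoc, ← mul_assoc W (star W), Unitary.mul_star_self_of_mem hW, one_mul]

lemma apply_self_eq_of_isDiag_planeRotation {t u : m} (htu : t ≠ u) (hM : (star V * Q * V).IsDiag)
    (hW : (star (V * planeRotation t u) * Q * (V * planeRotation t u)).IsDiag) :
    (star V * Q * V) t t = (star V * Q * V) u u := by
  have h := hW htu
  rw [star_mul, show star (planeRotation t u) * star V * Q * (V * planeRotation t u)
      = star (planeRotation t u) * (star V * Q * V) * planeRotation t u by simp only [mul_assoc],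
    ← hM.diagonal_diag, planeRotation_entry htu] at h
  simpa [sub_eq_zero] using h

lemma IsProjOfRank.eq_or_of_isDiag (hM : IsProjOfRank M s.card) (hdiag : M.IsDiag)
    (hblock : ∀ t u, (t ∈ s ↔ u ∈ s) → M t t = M u u) (hs : s.Nonempty) (hsc : sᶜ.Nonempty) :
    M = diagonal (fun i => (((s : Set m).indicator 1 i : ℝ) : ℂ)) ∨
      (Fintype.card m = 2 * s.card ∧
        M = 1 - diagonal (fun i => (((s : Set m).indicator 1 i : ℝ) : ℂ))) := by
  obtain ⟨t, ht⟩ := hs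
  obtain ⟨u, hu⟩ := hsc
  rw [Finset.mem_compl] at hu
  have hMab : M = diagonal fun i => if i ∈ s then M t t else M u u := by
    conv_lhs => rw [← hdiag.diagonal_diag]
    congr 1
    ext i
    split_ifs with hi
    · exact hblock i t (iff_of_true hi ht)
    · exact hblock i u (iff_of_false hi hu)
  have h01 : ∀ i, M i i = 0 ∨ M i i = 1 := fun i => by
    have h := congrFun (congrFun hM.1 i) i
    rw [← hdiag.diagonal_diag, diagonal_mul_diagonal] at h
    simp only [diagonal_apply_eq, diag_apply] at h
    exact IsIdempotentElem.iff_eq_zero_or_one.mp h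
  have htr := hM.trace_eq
  rw [hMab, trace_diagonal, Finset.sum_ite] at htr
  have hcompl : (Finset.univ.filter fun x => x ∉ s) = sᶜ := by ext; simp
  simp only [Finset.filter_mem_eq_inter, Finset.univ_inter, hcompl, Finset.sum_const,
    nsmul_eq_mul] at htr
  have hcard : sᶜ.card + s.card = Fintype.card m := by
    rw [Finset.card_compl]
    exact Nat.sub_add_cancel (Finset.card_le_univ s)
  rw [hMab]
  rcases h01 t with ha | ha <;> rcases h01 u with hb | hb <;> rw [ha, hb] at htr ⊢
  · have : s.card = 0 := by exact_mod_cast (by simpa using htr.symm : (s.card : ℂ) = 0)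
    exact absurd (Finset.card_pos.mpr ⟨t, ht⟩) (by omega)
  · have : sᶜ.card = s.card := by exact_mod_cast (by simpa using htr : (sᶜ.card : ℂ) = s.card)
    refine Or.inr ⟨by omega, ?_⟩
    rw [← diagonal_one, diagonal_sub]
    congr 1
    ext i
    by_cases hi : i ∈ s <;> simp [hi]
  · left
    congr 1
    ext i
    by_cases hi : i ∈ s <;> simp [hi]
  · have : sᶜ.card = 0 := by exact_mod_cast (by simpa using htr : (sᶜ.card : ℂ) = 0)
    exact absurd (Finset.card_pos.mpr ⟨u, Finset.mem_compl.mpr hu⟩) (by omega)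

lemma eq_or_eq_one_sub_of_forall_commute (hk : 0 < k) (hkm : k < Fintype.card m)
    (hP : IsProjOfRank P k) (hQ : IsProjOfRank Q k)
    (hcomm : ∀ B ∈ wkAttaining k P, Commute B Q) :
    P = Q ∨ (Fintype.card m = 2 * k ∧ P = 1 - Q) := by
  obtain ⟨V, hV, s, rfl, rfl⟩ := hP.exists_eq_conjDiag_indicator
  have hdiag := isDiag_star_mul_mul_of_forall_commute hV rfl hcomm
  have hblock : ∀ t u, (t ∈ s ↔ u ∈ s) → (star V * Q * V) t t = (star V * Q * V) u u := by
    intro t u hts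
    rcases eq_or_ne t u with rfl | htu
    · rfl
    -- Rotating `V` in a plane on which `P` is constant gives another eigenbasis of `P`.
    have hW := planeRotation_mem_unitaryGroup htu
    refine apply_self_eq_of_isDiag_planeRotation htu hdiag
      (isDiag_star_mul_mul_of_forall_commute (Submonoid.mul_mem _ hV hW) ?_ hcomm)
    refine (conjDiag_mul_eq_of_commute hW (commute_planeRotation_diagonal ?_)).symm
    by_cases ht : t ∈ s <;> simp [ht, hts.not.mp, hts.mp]
  have hsc : sᶜ.Nonempty := by
    rw [← Finset.card_pos, Finset.card_compl]
    omega
  have hQV : Q = V * (star V * Q * V) * star V := by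
    simp only [← mul_assoc, Unitary.mul_star_self_of_mem hV, one_mul, mul_assoc Q, mul_one]
  rcases (hQ.star_mul_mul hV).eq_or_of_isDiag hdiag hblock (Finset.card_pos.mp hk) hsc with
    h | ⟨hn, h⟩
  · exact Or.inl (by rw [hQV, h]; rfl)
  · refine Or.inr ⟨hn, ?_⟩
    rw [hQV, h, mul_sub, sub_mul, mul_one, Unitary.mul_star_self_of_mem hV, sub_sub_cancel]
    rfl

lemma conjDiag_const_mem_wkAttaining (hV : V ∈ unitaryGroup m ℂ) (hQ : IsProjOfRank Q k) {c : ℝ}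
    (hc : 0 ≤ c) : conjDiag V (fun _ => c) ∈ wkAttaining k Q := by
  obtain ⟨s, -, hs⟩ := Finset.exists_subset_card_eq (s := Finset.univ) (by simpa using hQ.le_card)
  refine ⟨conjDiag_isHermitian _ _, ?_⟩
  rw [trace_conjDiag_mul_eq_sum_re V hQ.isHermitian, ← hs,
    wk_conjDiag hV hc (fun _ _ => le_rfl) fun _ _ => (abs_of_nonneg hc).le]
  congr 1
  rw [← Finset.mul_sum, (hQ.star_mul_mul hV).sum_re_diag, Finset.sum_const, hs, nsmul_eq_mul,
    mul_comm]

lemma conjDiag_const_sub_mem_wkAttaining (hk : 0 < k) (hV : V ∈ unitaryGroup m ℂ)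
    (hQ : IsProjOfRank Q k) (hQ' : IsProjOfRank (1 - Q) k) {d : m → ℝ} {c : ℝ}
    (hdc : ∀ i, d i ≤ c) (hB : conjDiag V d ∈ wkAttaining k (1 - Q)) :
    conjDiag V ((fun _ => c) - d) ∈ wkAttaining k Q := by
  have hn : Fintype.card m = k + k := by
    have h := congrArg trace (add_sub_cancel Q 1)
    rw [trace_add, hQ.trace_eq, hQ'.trace_eq, trace_one] at h
    exact_mod_cast h.symm
  obtain ⟨s, θ, hs, hθs, hθc⟩ := exists_finset_card_eq_threshold d hk hQ.le_card
  have hsc : sᶜ.card = k := by rw [Finset.card_compl]; omega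
  have hsum : ∑ i, ((star V * Q * V) i i).re = k := (hQ.star_mul_mul hV).sum_re_diag
  have htop : ∑ i, d i * (1 - ((star V * Q * V) i i).re) = ∑ i ∈ s, d i := by
    have hdiag : ∀ i, ((star V * (1 - Q) * V) i i).re = 1 - ((star V * Q * V) i i).re := by
      simp [mul_sub, sub_mul, Unitary.star_mul_self_of_mem hV]
    simpa only [hdiag] using sum_mul_diag_conj_eq_of_mem_wkAttaining hV hQ' hs hθs hθc hB
  have hθc' : θ ≤ c := by
    obtain ⟨i, hi⟩ := Finset.card_pos.mp (hs ▸ hk)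
    exact (hθs i hi).trans (hdc i)
  have hθsc : ∀ j ∈ sᶜ, c - θ ≤ c - d j := fun j hj =>
    sub_le_sub_left (hθc j (Finset.mem_compl.mp hj)) c
  have hθs' : ∀ i ∉ sᶜ, |c - d i| ≤ c - θ := fun i hi => by
    rw [Finset.notMem_compl] at hi
    rw [abs_of_nonneg (sub_nonneg.mpr (hdc i))]
    exact sub_le_sub_left (hθs i hi) c
  refine ⟨conjDiag_isHermitian _ _, ?_⟩
  rw [trace_conjDiag_mul_eq_sum_re V hQ.isHermitian, ← hsc,
    wk_conjDiag hV (d := (fun _ => c) - d) (sub_nonneg.mpr hθc') hθsc hθs']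
  congr 1
  have hsplit := Finset.sum_add_sum_compl s d
  simp only [Pi.sub_apply, sub_mul, mul_sub, mul_one, Finset.sum_sub_distrib, ← Finset.mul_sum,
    Finset.sum_const, hsc, nsmul_eq_mul] at htop ⊢
  linear_combination htop + hsplit + c * hsum

lemma wkAttaining_one_sub_subset_span (hk : 0 < k) (hQ : IsProjOfRank Q k)
    (hQ' : IsProjOfRank (1 - Q) k) :
    wkAttaining k (1 - Q) ⊆ Submodule.span ℝ (wkAttaining k Q) := by
  intro B hB
  obtain ⟨U, hU, d, rfl⟩ := IsHermitian.exists_eq_conjDiag hB.1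
  set c := ∑ i, |d i|
  have hdc : ∀ i, d i ≤ c := fun i =>
    (le_abs_self _).trans (Finset.single_le_sum (fun j _ => abs_nonneg (d j)) (Finset.mem_univ i))
  have hc : 0 ≤ c := Finset.sum_nonneg fun i _ => abs_nonneg (d i)
  rw [← sub_sub_cancel (conjDiag U fun _ => c) (conjDiag U d), ← conjDiag_sub]
  exact Submodule.sub_mem _ (Submodule.subset_span (conjDiag_const_mem_wkAttaining hU hQ hc))
    (Submodule.subset_span (conjDiag_const_sub_mem_wkAttaining hk hU hQ hQ' hdc hB))

/-- for rank-`k` orthogonal projections `P, Q` (Hermitian setting),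
`span_ℝ S(P) = span_ℝ S(Q)` iff `P = Q`, or `n = 2k` and `P = I - Q`. -/
theorem stmt_16 (n k : ℕ) (hk : 1 ≤ k) (hkn : k < n)
    (P Q : Matrix (Fin n) (Fin n) ℂ) (hP : IsProjOfRank P k) (hQ : IsProjOfRank Q k) :
    Submodule.span ℝ
        {B : Matrix (Fin n) (Fin n) ℂ | B.IsHermitian ∧ (B * P).trace = (wk k B : ℂ)}
      = Submodule.span ℝ
        {B : Matrix (Fin n) (Fin n) ℂ | B.IsHermitian ∧ (B * Q).trace = (wk k B : ℂ)}
    ↔ (P = Q ∨ (n = 2 * k ∧ P = 1 - Q)) := by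
  change Submodule.span ℝ (wkAttaining k P) = Submodule.span ℝ (wkAttaining k Q) ↔ _
  have hkn' : k < Fintype.card (Fin n) := by simpa using hkn
  constructor
  · intro h
    simpa using eq_or_eq_one_sub_of_forall_commute hk hkn' hP hQ fun B hB =>
      commute_of_mem_span_wkAttaining hk hQ (h ▸ Submodule.subset_span hB)
  · rintro (rfl | ⟨-, rfl⟩)
    · rfl
    have hQ' : IsProjOfRank (1 - (1 - Q)) k := by rwa [sub_sub_cancel]
    have hsub := wkAttaining_one_sub_subset_span hk hP hQ'
    rw [sub_sub_cancel] at hsub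
    exact le_antisymm (Submodule.span_le.mpr (wkAttaining_one_sub_subset_span hk hQ hP))
      (Submodule.span_le.mpr hsub)
end

section
/- Let s ≤ n and n₁, ..., n_s be positive integers with n₁ + ... + n_s = n, and fix k ∈ {1, ..., n−1}. Then the number of subsets {i₁, ..., i_r} ⊆ {1, ..., s} with n_{i₁} + ... + n_{i_r} = k is at most C(n, k), with equality if and only if s = n and n₁ = ... = n_s = 1. -/
/-- if `n₁ + ... + n_s = n` with each `nᵢ ≥ 1`, `s ≤ n`, and `1 ≤ k ≤ n - 1`,
then the number of subsets of indices whose parts sum to `k` is at most `C(n, k)`, with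
equality iff `s = n` and all parts equal `1`. -/
theorem stmt_18 (n s k : ℕ) (hs : s ≤ n) (f : Fin s → ℕ) (hf : ∀ i, 0 < f i)
    (hsum : ∑ i, f i = n) (hk1 : 1 ≤ k) (hkn : k ≤ n - 1) :
    (Finset.univ.filter (fun t : Finset (Fin s) => ∑ i ∈ t, f i = k)).card ≤ n.choose k ∧
    ((Finset.univ.filter (fun t : Finset (Fin s) => ∑ i ∈ t, f i = k)).card = n.choose k
      ↔ (s = n ∧ ∀ i, f i = 1)) := by
  classical
  set F := Finset.univ.filter (fun t : Finset (Fin s) => ∑ i ∈ t, f i = k) with hF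
  set S : Fin s → ℕ := fun i => ∑ j ∈ Finset.univ.filter (fun j => j < i), f j with hSdef
  set B : Fin s → Finset ℕ := fun i => Finset.Ico (S i) (S i + f i) with hBdef
  have hSle : ∀ i : Fin s, S i + f i = ∑ j ∈ Finset.univ.filter (fun j => j ≤ i), f j := by
    intro i
    have h1 : Finset.univ.filter (fun j => j ≤ i)
        = insert i (Finset.univ.filter (fun j => j < i)) := by
      ext j
      simp [le_iff_lt_or_eq, or_comm, eq_comm]
    rw [h1, Finset.sum_insert (by simp), hSdef]
    ring
  have hSn : ∀ i, S i + f i ≤ n := by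
    intro i
    rw [hSle, ← hsum]
    exact Finset.sum_le_sum_of_subset (Finset.filter_subset _ _)
  have hmono : ∀ i j : Fin s, i < j → S i + f i ≤ S j := by
    intro i j hij
    rw [hSle]
    exact Finset.sum_le_sum_of_subset
      (by intro x; simp; intro hx; exact lt_of_le_of_lt hx hij)
  have hmem : ∀ i, S i ∈ B i := by
    intro i; simp only [hBdef, Finset.mem_Ico]; exact ⟨le_refl _, by have := hf i; omega⟩
  have hdisj : ∀ i j : Fin s, i ≠ j → Disjoint (B i) (B j) := by
    intro i j hij
    rcases lt_or_gt_of_ne hij with h | h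
    · exact Finset.disjoint_left.2 (by
        intro x hxi hxj
        simp only [hBdef, Finset.mem_Ico] at hxi hxj
        have := hmono i j h
        omega)
    · exact Finset.disjoint_left.2 (by
        intro x hxi hxj
        simp only [hBdef, Finset.mem_Ico] at hxi hxj
        have := hmono j i h
        omega)
  set Φ : Finset (Fin s) → Finset ℕ := fun t => t.biUnion B with hΦ
  have hrec : ∀ (t : Finset (Fin s)) (i : Fin s), i ∈ t ↔ S i ∈ Φ t := by
    intro t i
    constructor
    · intro hi; exact Finset.mem_biUnion.2 ⟨i, hi, hmem i⟩
    · intro hi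
      rcases Finset.mem_biUnion.1 hi with ⟨j, hj, hSij⟩
      by_cases hji : j = i
      · rwa [hji] at hj
      · exact absurd hSij (Finset.disjoint_left.1 (hdisj i j (Ne.symm hji)) (hmem i))
  have hΦinj : Function.Injective Φ := by
    intro t₁ t₂ h
    ext i
    rw [hrec t₁ i, hrec t₂ i, h]
  have hΦcard : ∀ t, (Φ t).card = ∑ i ∈ t, f i := by
    intro t
    rw [hΦ]
    simp only
    rw [Finset.card_biUnion (fun i _ j _ hij => hdisj i j hij)]
    simp [hBdef]
  have hΦsub : ∀ t, Φ t ⊆ Finset.range n := by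
    intro t x hx
    rcases Finset.mem_biUnion.1 hx with ⟨j, _, hxj⟩
    simp only [hBdef, Finset.mem_Ico] at hxj
    simp only [Finset.mem_range]
    exact lt_of_lt_of_le hxj.2 (hSn j)
  have hmaps : ∀ t ∈ F, Φ t ∈ Finset.powersetCard k (Finset.range n) := by
    intro t ht
    rw [Finset.mem_powersetCard]
    refine ⟨hΦsub t, ?_⟩
    rw [hΦcard]
    exact (Finset.mem_filter.1 ht).2
  have hle : F.card ≤ n.choose k := by
    calc F.card ≤ (Finset.powersetCard k (Finset.range n)).card :=
          Finset.card_le_card_of_injOn Φ hmaps (fun a _ b _ h => hΦinj h)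
      _ = n.choose k := by rw [Finset.card_powersetCard, Finset.card_range]
  refine ⟨hle, ?_, ?_⟩
  · -- equality implies s = n and all parts 1
    intro heq
    by_contra hcon
    have hex : ∃ i₀, 2 ≤ f i₀ := by
      by_contra hall
      push_neg at hall
      have h1 : ∀ i, f i = 1 := fun i => by have := hall i; have := hf i; omega
      have hsn : s = n := by
        rw [← hsum]; simp [h1]
      exact hcon ⟨hsn, h1⟩
    obtain ⟨i₀, hi₀⟩ := hex
    have haN : S i₀ + 1 < n := by have := hSn i₀; omega
    have hb : S i₀ + 1 ∈ B i₀ := by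
      simp only [hBdef, Finset.mem_Ico]; omega
    have hsubr : ({S i₀, S i₀ + 1} : Finset ℕ) ⊆ Finset.range n := by
      intro x hx
      simp only [Finset.mem_insert, Finset.mem_singleton] at hx
      rcases hx with rfl | rfl <;> simp only [Finset.mem_range] <;> omega
    have hcard2 : ((Finset.range n) \ {S i₀, S i₀ + 1}).card = n - 2 := by
      rw [Finset.card_sdiff_of_subset hsubr, Finset.card_range]
      norm_num
    obtain ⟨w, hw, hwcard⟩ := Finset.exists_subset_card_eq
      (s := (Finset.range n) \ {S i₀, S i₀ + 1}) (n := k - 1) (by omega)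
    have hau : S i₀ ∉ w := by
      intro h
      have := Finset.mem_sdiff.1 (hw h)
      simp at this
    set u := insert (S i₀) w with hu
    have hucard : u.card = k := by
      rw [hu, Finset.card_insert_of_notMem hau, hwcard]; omega
    have husub : u ⊆ Finset.range n := by
      intro x hx
      rcases Finset.mem_insert.1 hx with rfl | hx
      · simp only [Finset.mem_range]; omega
      · exact (Finset.mem_sdiff.1 (hw hx)).1
    have hbu : S i₀ + 1 ∉ u := by
      intro h
      rcases Finset.mem_insert.1 h with h | h
      · omega
      · have := Finset.mem_sdiff.1 (hw h)
        simp at this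
    have hunotim : u ∉ F.image Φ := by
      intro h
      rcases Finset.mem_image.1 h with ⟨t, ht, hΦt⟩
      have hau' : S i₀ ∈ Φ t := by rw [hΦt, hu]; exact Finset.mem_insert_self _ _
      have hit : i₀ ∈ t := (hrec t i₀).2 hau'
      have hbt : S i₀ + 1 ∈ Φ t := Finset.mem_biUnion.2 ⟨i₀, hit, hb⟩
      rw [hΦt] at hbt
      exact hbu hbt
    have hss : F.image Φ ⊂ Finset.powersetCard k (Finset.range n) := by
      refine (Finset.ssubset_iff_of_subset ?_).2 ⟨u, ?_, hunotim⟩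
      · intro x hx
        rcases Finset.mem_image.1 hx with ⟨t, ht, rfl⟩
        exact hmaps t ht
      · rw [Finset.mem_powersetCard]; exact ⟨husub, hucard⟩
    have hlt : F.card < n.choose k := by
      have h1 : F.card = (F.image Φ).card :=
        (Finset.card_image_of_injOn (fun a _ b _ h => hΦinj h)).symm
      rw [h1]
      calc (F.image Φ).card < (Finset.powersetCard k (Finset.range n)).card :=
            Finset.card_lt_card hss
        _ = n.choose k := by rw [Finset.card_powersetCard, Finset.card_range]
    omega
  · rintro ⟨hsn, hf1⟩
    have hFeq : F = Finset.powersetCard k (Finset.univ : Finset (Fin s)) := by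
      ext t
      simp [hF, Finset.mem_powersetCard, hf1]
    rw [hFeq, Finset.card_powersetCard, Finset.card_univ, Fintype.card_fin, hsn]
end
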